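/- Suppose 0 ≤ s ≤ t and there is no layer parameter u of X with s < u ≤ t. Then the map σ : π₀L_{s,k}(X) → π₀L_{t,k}(X), sending each component at scale s to the unique component at scale t containing it, is a bijection. -/

import Mathlib

variable {Z : Type*} [MetricSpace Z]

/-- Vertex set `V_{s,k}(X)` of the degree-Rips complex: points of `X` having at
least `k` other points of `X` within distance `s`. -/
def drVertex (X : Set Z) (k : ℕ) (s : ℝ) : Set Z :=
  {x ∈ X | k ≤ {y ∈ X | y ≠ x ∧ dist x y ≤ s}.ncard}

/-- The generating relation for components: two vertices at distance at most `s`. -/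
def drStep (X : Set Z) (k : ℕ) (s : ℝ) (x y : Z) : Prop :=
  x ∈ drVertex X k s ∧ y ∈ drVertex X k s ∧ dist x y ≤ s

/-- `C` is a degree-Rips component (an element of `π₀ L_{s,k}(X)`): the class of
some vertex `x` under the equivalence relation generated by `drStep`. -/
def drComp (X : Set Z) (k : ℕ) (s : ℝ) (C : Set Z) : Prop :=
  ∃ x ∈ drVertex X k s, C = {y | Relation.ReflTransGen (drStep X k s) x y}

/-- `(t, C)` is a layer point of `Γ_k(X)`: it is an element of the hierarchy, and
every element `(s, D) ≤ (t, C)` with `s < t` has `D` a proper subset of `C`. -/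
def IsLayer (X : Set Z) (k : ℕ) (t : ℝ) (C : Set Z) : Prop :=
  0 ≤ t ∧ drComp X k t C ∧
    ∀ s D, 0 ≤ s → drComp X k s D → s < t → D ⊆ C → D ⊂ C

/-- `(t, C)` is a branch point of `Γ_k(X)`. -/
def IsBranch (X : Set Z) (k : ℕ) (t : ℝ) (C : Set Z) : Prop :=
  0 ≤ t ∧ drComp X k t C ∧
    ((∀ s D, 0 ≤ s → drComp X k s D → s < t → ¬D ⊆ C) ∨
      ∃ s₀, s₀ < t ∧ ∀ s, s₀ ≤ s → s < t →
        ∃ D₁ D₂, drComp X k s D₁ ∧ drComp X k s D₂ ∧ D₁ ≠ D₂ ∧ D₁ ⊆ C ∧ D₂ ⊆ C)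

/-- `(t, D)` is the maximal layer point below the element `(u, C)` of `Γ_k(X)`:
it is a layer point, `(t, D) ≤ (u, C)`, and every layer point below `(u, C)`
is below `(t, D)`. -/
def IsMaxLayerBelow (X : Set Z) (k : ℕ) (u : ℝ) (C : Set Z) (t : ℝ) (D : Set Z) : Prop :=
  IsLayer X k t D ∧ t ≤ u ∧ D ⊆ C ∧
    ∀ t' D', IsLayer X k t' D' → t' ≤ u → D' ⊆ C → t' ≤ t ∧ D' ⊆ D

/-- `t` is a layer parameter of `X`. -/
def IsLayerParam (X : Set Z) (k : ℕ) (t : ℝ) : Prop :=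
  ∃ C, IsLayer X k t C

/-- A stability map `θ : Y → X` (encoded as a map `Z → Z` carrying `Y` into `X`). -/
def IsStabilityMap (X Y : Set Z) (k : ℕ) (r : ℝ) (θ : Z → Z) : Prop :=
  (∀ y ∈ Y, θ y ∈ X) ∧
    ∀ s : ℝ, 0 ≤ s →
      (∀ y₁ y₂, y₁ ∈ drVertex Y k s → y₂ ∈ drVertex Y k s → dist y₁ y₂ ≤ s →
          θ y₁ ∈ drVertex X k (s + 2 * r) ∧ θ y₂ ∈ drVertex X k (s + 2 * r) ∧
          dist (θ y₁) (θ y₂) ≤ s + 2 * r) ∧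
      (∀ x ∈ drVertex X k s, ∃ C, drComp X k (s + 2 * r) C ∧ x ∈ C ∧ θ x ∈ C) ∧
      (∀ y ∈ drVertex Y k s, ∃ D, drComp Y k (s + 2 * r) D ∧ y ∈ D ∧ θ y ∈ D)

/-- Vertices of the degree-Rips complex at scale infinity: points with at least
`k` other points. -/
def drVertexInf (W : Set Z) (k : ℕ) : Set Z :=
  {w ∈ W | k ≤ {w' ∈ W | w' ≠ w}.ncard}

/-- Phase change numbers: distances between distinct vertices at scale infinity. -/
def IsPhaseChange (W : Set Z) (k : ℕ) (t : ℝ) : Prop :=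
  ∃ w₁ ∈ drVertexInf W k, ∃ w₂ ∈ drVertexInf W k, w₁ ≠ w₂ ∧ t = dist w₁ w₂

/-! Components only change at the finitely many pairwise distances of `X`, so among those
scales in `[s, t]` (together with `s`) there is a least `m` at which a given component `D` at
scale `t` is still a component. If `s < m`, then `(m, D)` is not a layer point, so `D` is a
component at some scale `s' < m`; either `s' ≤ s`, and `D` is a component at every scale
between `s'` and `m`, in particular at `s`, or lowering `s'` to a critical scale contradicts
the minimality of `m`. Hence every component at scale `t` is a component at scale `s`, which
gives both surjectivity and injectivity of `σ`. -/

section DegreeRips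

variable {X : Set Z} {k : ℕ} {a b c s t : ℝ} {C D : Set Z}

instance drStep.instSymm : Std.Symm (drStep X k s) where
  symm _ _ h := ⟨h.2.1, h.1, by rw [dist_comm]; exact h.2.2⟩

theorem drVertex_mono (hX : X.Finite) (hab : a ≤ b) : drVertex X k a ⊆ drVertex X k b :=
  fun _ ⟨hxX, hk⟩ ↦ ⟨hxX, hk.trans <| Set.ncard_le_ncard
    (fun _ ⟨hy, hne, hd⟩ ↦ ⟨hy, hne, hd.trans hab⟩) (hX.subset fun _ hy ↦ hy.1)⟩

theorem drStep_mono (hX : X.Finite) (hab : a ≤ b) {x y : Z} (h : drStep X k a x y) :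
    drStep X k b x y :=
  ⟨drVertex_mono hX hab h.1, drVertex_mono hX hab h.2.1, h.2.2.trans hab⟩

theorem drComp.eq_setOf_of_mem (hC : drComp X k s C) {x : Z} (hx : x ∈ C) :
    C = {y | Relation.ReflTransGen (drStep X k s) x y} := by
  obtain ⟨x₀, -, rfl⟩ := hC
  ext y
  exact ⟨fun hy ↦ (Std.Symm.symm _ _ hx).trans hy, fun hy ↦ Relation.ReflTransGen.trans hx hy⟩

theorem drComp.eq_of_subset (hC : drComp X k s C) (hD : drComp X k s D) (hCD : C ⊆ D) :
    C = D := by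
  obtain ⟨x, -, rfl⟩ := hC
  exact (hD.eq_setOf_of_mem (hCD Relation.ReflTransGen.refl)).symm

theorem drComp.of_le_of_le (hX : X.Finite) (ha : drComp X k a D) (hc : drComp X k c D)
    (hab : a ≤ b) (hbc : b ≤ c) : drComp X k b D := by
  obtain ⟨x, hx, hDx⟩ := ha
  have hxD : x ∈ D := hDx ▸ Relation.ReflTransGen.refl
  refine ⟨x, drVertex_mono hX hab hx, Set.Subset.antisymm ?_ ?_⟩
  · rw [hDx]
    exact fun _ ↦ Relation.ReflTransGen.mono (fun _ _ ↦ drStep_mono hX hab) _ _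
  · rw [hc.eq_setOf_of_mem hxD]
    exact fun _ ↦ Relation.ReflTransGen.mono (fun _ _ ↦ drStep_mono hX hbc) _ _

theorem drComp_iff_of_dist_le (hab : a ≤ b)
    (hdist : ∀ x ∈ X, ∀ y ∈ X, dist x y ≤ b → dist x y ≤ a) :
    drComp X k a D ↔ drComp X k b D := by
  have hle : ∀ x ∈ X, ∀ y ∈ X, dist x y ≤ a ↔ dist x y ≤ b :=
    fun x hx y hy ↦ ⟨(·.trans hab), hdist x hx y hy⟩
  have hV : drVertex X k a = drVertex X k b := by
    ext x
    refine ⟨fun ⟨hx, hk⟩ ↦ ⟨hx, ?_⟩, fun ⟨hx, hk⟩ ↦ ⟨hx, ?_⟩⟩ <;>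
      convert hk using 3 <;> ext y <;> simp +contextual [hle x hx y]
  have hR : drStep X k a = drStep X k b := by
    ext x y
    simp only [drStep, hV]
    exact and_congr_right fun hx ↦ and_congr_right fun hy ↦ hle x hx.1 y hy.1
  simp only [drComp, hV, hR]

/-- The scales at which the degree-Rips filtration of `X` can change. -/
def pairDists (X : Set Z) : Set ℝ :=
  (fun p : Z × Z ↦ dist p.1 p.2) '' X ×ˢ X

theorem pairDists_finite (hX : X.Finite) : (pairDists X).Finite :=
  (hX.prod hX).image _

theorem exists_mem_insert_pairDists (hX : X.Finite) {u : ℝ} (hsu : s ≤ u) :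
    ∃ b ∈ insert s (pairDists X), s ≤ b ∧ b ≤ u ∧
      ∀ x ∈ X, ∀ y ∈ X, dist x y ≤ u → dist x y ≤ b := by
  obtain ⟨b, ⟨hbG, hsb, hbu⟩, hmax⟩ := Set.exists_max_image
    {b ∈ insert s (pairDists X) | s ≤ b ∧ b ≤ u} id
    (((pairDists_finite hX).insert s).subset fun _ h ↦ h.1) ⟨s, by simp [hsu]⟩
  refine ⟨b, hbG, hsb, hbu, fun x hx y hy hxy ↦ ?_⟩
  rcases le_total (dist x y) s with hxs | hsx
  · exact hxs.trans hsb
  · exact hmax _ ⟨Set.mem_insert_of_mem _ ⟨(x, y), ⟨hx, hy⟩, rfl⟩, hsx, hxy⟩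

theorem drComp_of_forall_not_isLayerParam (hX : X.Finite) (hs : 0 ≤ s) (hst : s ≤ t)
    (hgap : ∀ u, s < u → u ≤ t → ¬IsLayerParam X k u) (hD : drComp X k t D) :
    drComp X k s D := by
  obtain ⟨b, hbG, hsb, hbt, hb⟩ := exists_mem_insert_pairDists hX hst
  obtain ⟨m, ⟨hmG, hsm, hmt, hm⟩, hmin⟩ := Set.exists_min_image
    {b ∈ insert s (pairDists X) | s ≤ b ∧ b ≤ t ∧ drComp X k b D} id
    (((pairDists_finite hX).insert s).subset fun _ h ↦ h.1)
    ⟨b, hbG, hsb, hbt, (drComp_iff_of_dist_le hbt hb).2 hD⟩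
  rcases hsm.eq_or_lt with rfl | hsm
  · exact hm
  obtain ⟨s', D', -, hD', hs'm, hD'D, hnot⟩ : ∃ s' D', 0 ≤ s' ∧ drComp X k s' D' ∧ s' < m ∧
      D' ⊆ D ∧ ¬D' ⊂ D := by
    by_contra! h
    exact hgap m hsm hmt ⟨D, hs.trans hsm.le, hm, h⟩
  obtain rfl := hD'D.eq_of_not_ssubset hnot
  rcases le_or_gt s' s with hs's | hss'
  · exact hD'.of_le_of_le hX hm hs's hsm.le
  obtain ⟨c, hcG, hsc, hcs', hc⟩ := exists_mem_insert_pairDists hX hss'.le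
  have hmc : m ≤ c :=
    hmin c ⟨hcG, hsc, hcs'.trans (hs'm.le.trans hmt), (drComp_iff_of_dist_le hcs' hc).2 hD'⟩
  exact (lt_irrefl m (hmc.trans_lt (hcs'.trans_lt hs'm))).elim

end DegreeRips

/-- if `0 ≤ s ≤ t` and there is no layer parameter `u` of `X`
with `s < u ≤ t`, then the map `σ : π₀ L_{s,k}(X) → π₀ L_{t,k}(X)`, sending
each component at scale `s` to the component at scale `t` containing it, is a
bijection (stated as surjectivity and injectivity of containment). -/
theorem sigma_bijection_on_components (X : Set Z) (hXfin : X.Finite) (k : ℕ)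
    (s t : ℝ) (hs : 0 ≤ s) (hst : s ≤ t)
    (hgap : ∀ u, s < u → u ≤ t → ¬IsLayerParam X k u) :
    (∀ D, drComp X k t D → ∃ C, drComp X k s C ∧ C ⊆ D) ∧
      ∀ C₁ C₂ D, drComp X k s C₁ → drComp X k s C₂ → drComp X k t D →
        C₁ ⊆ D → C₂ ⊆ D → C₁ = C₂ := by
  have hdescend : ∀ D, drComp X k t D → drComp X k s D :=
    fun D ↦ drComp_of_forall_not_isLayerParam hXfin hs hst hgap
  refine ⟨fun D hD ↦ ⟨D, hdescend D hD, subset_rfl⟩, fun C₁ C₂ D h₁ h₂ hD h₁D h₂D ↦ ?_⟩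
  rw [h₁.eq_of_subset (hdescend D hD) h₁D, h₂.eq_of_subset (hdescend D hD) h₂D]
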